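/- Let 𝒴 be a finite alphabet and let A, B be probability mass functions on 𝒴 with A(y) > 0 and B(y) > 0 for all y. For α ≥ 1 define f(A,B,α) := sup { (α−1)·h(β) + h((α−1)·β) − d_{(α−1)β}(A‖B) − (α−1)·d_β(B‖A) : β ∈ [0,1], (α−1)·β ≤ 1 }. Then for every α ≥ 1, this supremum is attained on the subinterval [0, 1/α]; that is, f(A,B,α) equals the supremum of the same expression restricted to β ∈ [0, 1/α]. -/

import Mathlib

/-- A probability mass function on a finite alphabet. -/
def IsPMF {X : Type*} [Fintype X] (P : X → ℝ) : Prop :=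
  (∀ x, 0 ≤ P x) ∧ ∑ x, P x = 1

/-- Kullback–Leibler divergence (natural logarithm, with the convention
`0 · log (0/q) = 0`). -/
noncomputable def KLdiv {X : Type*} [Fintype X] (P Q : X → ℝ) : ℝ :=
  ∑ x, P x * Real.log (P x / Q x)

/-- Partial divergence between `P` and `Q` with mismatch ratio `ρ`. -/
noncomputable def partialDiv {X : Type*} [Fintype X] (ρ : ℝ) (P Q : X → ℝ) : ℝ :=
  sInf { v : ℝ | ∃ P₁ P₂ : X → ℝ, IsPMF P₁ ∧ IsPMF P₂ ∧
    (∀ x, ρ * P₁ x + (1 - ρ) * P₂ x = P x) ∧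
    v = ρ * KLdiv P₁ Q + (1 - ρ) * KLdiv P₂ P }

/-- Binary entropy function (natural logarithm). -/
noncomputable def binEnt (p : ℝ) : ℝ :=
  -(p * Real.log p) - (1 - p) * Real.log (1 - p)

/-- The overhead cost
`f(A,B,α) = sup { (α−1)h(β) + h((α−1)β) − d_{(α−1)β}(A‖B) − (α−1)d_β(B‖A) :
  β ∈ [0,1], (α−1)β ≤ 1 }`. -/
noncomputable def overhead {Y : Type*} [Fintype Y] (A B : Y → ℝ) (α : ℝ) : ℝ :=
  sSup { v : ℝ | ∃ β : ℝ, β ∈ Set.Icc (0 : ℝ) 1 ∧ (α - 1) * β ≤ 1 ∧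
    v = (α - 1) * binEnt β + binEnt ((α - 1) * β)
        - partialDiv ((α - 1) * β) A B - (α - 1) * partialDiv β B A }

/-! ### Auxiliary elementary inequalities -/

lemma aux_sub_le_mul_log {p q : ℝ} (hp : 0 ≤ p) (hq : 0 < q) :
    p - q ≤ p * Real.log (p / q) := by
  rcases eq_or_lt_of_le hp with h | h
  · simp [← h]
    linarith
  · have h1 : Real.log (q / p) ≤ q / p - 1 := Real.log_le_sub_one_of_pos (by positivity)
    have h2 : Real.log (p / q) = - Real.log (q / p) := by
      rw [← Real.log_inv]
      congr 1
      field_simp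
    have h3 : p * Real.log (q / p) ≤ p * (q / p - 1) :=
      mul_le_mul_of_nonneg_left h1 h.le
    have h4 : p * (q / p - 1) = q - p := by field_simp
    rw [h2]
    nlinarith

lemma mul_log_le_sub {p q : ℝ} (hp : 0 ≤ p) (hq : 0 < q) :
    p * (Real.log q - Real.log p) ≤ q - p := by
  rcases eq_or_lt_of_le hp with h | h
  · simp [← h]; linarith
  · have h1 : Real.log q - Real.log p = Real.log (q / p) := (Real.log_div hq.ne' h.ne').symm
    have h2 : Real.log (q / p) ≤ q / p - 1 := Real.log_le_sub_one_of_pos (by positivity)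
    have h3 : p * Real.log (q / p) ≤ p * (q / p - 1) := mul_le_mul_of_nonneg_left h2 h.le
    have h4 : p * (q / p - 1) = q - p := by field_simp
    rw [h1]; nlinarith

/-! ### KL divergence facts -/

lemma KLdiv_nonneg {X : Type*} [Fintype X] {P Q : X → ℝ} (hP : IsPMF P)
    (hQ : IsPMF Q) (hQpos : ∀ x, 0 < Q x) : 0 ≤ KLdiv P Q := by
  have h : ∀ x ∈ Finset.univ, P x - Q x ≤ P x * Real.log (P x / Q x) :=
    fun x _ => aux_sub_le_mul_log (hP.1 x) (hQpos x)
  have := Finset.sum_le_sum h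
  rw [Finset.sum_sub_distrib, hP.2, hQ.2] at this
  simpa [KLdiv] using this

lemma KLdiv_self {X : Type*} [Fintype X] (P : X → ℝ) : KLdiv P P = 0 := by
  unfold KLdiv
  apply Finset.sum_eq_zero
  intro x _
  rcases eq_or_ne (P x) 0 with h | h
  · simp [h]
  · rw [div_self h, Real.log_one, mul_zero]

/-! ### Log-sum inequality -/

lemma logsum2 {x₁ x₂ y₁ y₂ : ℝ} (hx₁ : 0 ≤ x₁) (hx₂ : 0 ≤ x₂) (hy₁ : 0 < y₁) (hy₂ : 0 < y₂) :
    (x₁ + x₂) * Real.log ((x₁ + x₂) / (y₁ + y₂)) ≤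
      x₁ * Real.log (x₁ / y₁) + x₂ * Real.log (x₂ / y₂) := by
  have hY : 0 < y₁ + y₂ := by linarith
  rcases eq_or_lt_of_le (by linarith : (0:ℝ) ≤ x₁ + x₂) with hX | hX
  · have h1 : x₁ = 0 := by linarith
    have h2 : x₂ = 0 := by linarith
    simp [h1, h2]
  · set Z : ℝ := (x₁ + x₂) / (y₁ + y₂) with hZ
    have hZpos : 0 < Z := by positivity
    have key : ∀ x y : ℝ, 0 ≤ x → 0 < y →
        x * Real.log Z + (x - y * Z) ≤ x * Real.log (x / y) := by
      intro x y hx hy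
      rcases eq_or_lt_of_le hx with h | h
      · simp [← h]
        positivity
      · have h1 : x - y * Z ≤ x * Real.log (x / (y * Z)) :=
          aux_sub_le_mul_log hx (by positivity)
        have h2 : Real.log (x / (y * Z)) = Real.log (x / y) - Real.log Z := by
          rw [div_mul_eq_div_div]
          rw [Real.log_div (by positivity) hZpos.ne']
        nlinarith
    have k1 := key x₁ y₁ hx₁ hy₁
    have k2 := key x₂ y₂ hx₂ hy₂
    have hsum : (x₁ + x₂) * Real.log Z + ((x₁ + x₂) - (y₁ + y₂) * Z) ≤
        x₁ * Real.log (x₁ / y₁) + x₂ * Real.log (x₂ / y₂) := by linarith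
    have hYZ : (y₁ + y₂) * Z = x₁ + x₂ := by
      rw [hZ]; field_simp
    rw [hYZ] at hsum
    linarith

lemma key_logsum {a b p r : ℝ} (ha : 0 ≤ a) (hb : 0 < b) (hp : 0 ≤ p) (hr : 0 < r) :
    (a * p + b * r) * Real.log ((a * p + b * r) / ((a + b) * r)) ≤
      a * (p * Real.log (p / r)) := by
  rcases eq_or_lt_of_le ha with h | h
  · rw [← h]
    have : (0 * p + b * r) / ((0 + b) * r) = 1 := by
      field_simp; ring
    rw [this, Real.log_one]
    simp
  · have h1 := logsum2 (mul_nonneg h.le hp) (le_of_lt (by positivity : (0:ℝ) < b * r))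
      (by positivity : (0:ℝ) < a * r) (by positivity : (0:ℝ) < b * r)
    have e1 : (a * p) / (a * r) = p / r := by
      rw [mul_div_mul_left _ _ h.ne']
    have e2 : (b * r) / (b * r) = 1 := div_self (by positivity)
    rw [e1, e2, Real.log_one, mul_zero, add_zero] at h1
    have e3 : a * r + b * r = (a + b) * r := by ring
    rw [e3] at h1
    calc (a * p + b * r) * Real.log ((a * p + b * r) / ((a + b) * r))
        ≤ a * p * Real.log (p / r) := h1
      _ = a * (p * Real.log (p / r)) := by ring

/-! ### Partial divergence facts -/

section PD
variable {X : Type*} [Fintype X] {P Q : X → ℝ}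

/-- The feasible set appearing in the definition of `partialDiv`. -/
def pdSet (ρ : ℝ) (P Q : X → ℝ) : Set ℝ :=
  { v : ℝ | ∃ P₁ P₂ : X → ℝ, IsPMF P₁ ∧ IsPMF P₂ ∧
    (∀ x, ρ * P₁ x + (1 - ρ) * P₂ x = P x) ∧
    v = ρ * KLdiv P₁ Q + (1 - ρ) * KLdiv P₂ P }

lemma partialDiv_eq (ρ : ℝ) (P Q : X → ℝ) : partialDiv ρ P Q = sInf (pdSet ρ P Q) := rfl

lemma pdSet_nonempty (ρ : ℝ) (hP : IsPMF P) : (pdSet ρ P Q).Nonempty :=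
  ⟨ρ * KLdiv P Q + (1 - ρ) * KLdiv P P, P, P, hP, hP, fun x => by ring, rfl⟩

lemma pdSet_mem_nonneg {ρ : ℝ} (hρ0 : 0 ≤ ρ) (hρ1 : ρ ≤ 1)
    (hP : IsPMF P) (hPpos : ∀ x, 0 < P x) (hQ : IsPMF Q) (hQpos : ∀ x, 0 < Q x) :
    ∀ v ∈ pdSet ρ P Q, 0 ≤ v := by
  rintro v ⟨P₁, P₂, hP₁, hP₂, hmix, rfl⟩
  have h1 := KLdiv_nonneg hP₁ hQ hQpos
  have h2 := KLdiv_nonneg hP₂ hP hPpos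
  have := mul_nonneg hρ0 h1
  have := mul_nonneg (by linarith : (0:ℝ) ≤ 1 - ρ) h2
  linarith

lemma partialDiv_nonneg {ρ : ℝ} (hρ0 : 0 ≤ ρ) (hρ1 : ρ ≤ 1)
    (hP : IsPMF P) (hPpos : ∀ x, 0 < P x) (hQ : IsPMF Q) (hQpos : ∀ x, 0 < Q x) :
    0 ≤ partialDiv ρ P Q :=
  Real.sInf_nonneg (pdSet_mem_nonneg hρ0 hρ1 hP hPpos hQ hQpos)

lemma pdSet_bddBelow {ρ : ℝ} (hρ0 : 0 ≤ ρ) (hρ1 : ρ ≤ 1)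
    (hP : IsPMF P) (hPpos : ∀ x, 0 < P x) (hQ : IsPMF Q) (hQpos : ∀ x, 0 < Q x) :
    BddBelow (pdSet ρ P Q) :=
  ⟨0, fun v hv => pdSet_mem_nonneg hρ0 hρ1 hP hPpos hQ hQpos v hv⟩

lemma partialDiv_zero_le (hP : IsPMF P) (hPpos : ∀ x, 0 < P x) (hQ : IsPMF Q)
    (hQpos : ∀ x, 0 < Q x) : partialDiv 0 P Q ≤ 0 := by
  have hmem : (0:ℝ) ∈ pdSet (0:ℝ) P Q := by
    refine ⟨P, P, hP, hP, fun x => by ring, ?_⟩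
    rw [KLdiv_self]; ring
  exact csInf_le (pdSet_bddBelow le_rfl zero_le_one hP hPpos hQ hQpos) hmem

/-- Monotonicity of the partial divergence in the mismatch ratio. -/
lemma partialDiv_mono {ρ₁ ρ₂ : ℝ} (h0 : 0 ≤ ρ₁) (h12 : ρ₁ ≤ ρ₂) (h1 : ρ₂ ≤ 1)
    (hP : IsPMF P) (hPpos : ∀ x, 0 < P x) (hQ : IsPMF Q) (hQpos : ∀ x, 0 < Q x) :
    partialDiv ρ₁ P Q ≤ partialDiv ρ₂ P Q := by
  rcases eq_or_lt_of_le h12 with rfl | hlt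
  · exact le_rfl
  rcases eq_or_lt_of_le h0 with rfl | hρ₁pos
  · exact le_trans (partialDiv_zero_le hP hPpos hQ hQpos)
      (partialDiv_nonneg (by linarith) h1 hP hPpos hQ hQpos)
  have hρ₂pos : 0 < ρ₂ := lt_trans hρ₁pos hlt
  set t : ℝ := ρ₁ / ρ₂ with ht
  have htρ : t * ρ₂ = ρ₁ := div_mul_cancel₀ _ hρ₂pos.ne'
  have ht0 : 0 < t := div_pos hρ₁pos hρ₂pos
  have ht1 : t < 1 := (div_lt_one hρ₂pos).mpr hlt
  have hr1 : ρ₁ < 1 := lt_of_lt_of_le hlt h1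
  have hr1' : 0 < 1 - ρ₁ := by linarith
  have claim : ∀ v ∈ pdSet ρ₂ P Q, partialDiv ρ₁ P Q ≤ t * v := by
    rintro v ⟨P₁, P₂, hP₁, hP₂, hmix, rfl⟩
    set a : ℝ := t * (1 - ρ₂) with ha
    set b : ℝ := 1 - t with hb
    have ha0 : 0 ≤ a := mul_nonneg ht0.le (by linarith)
    have hb0 : 0 < b := by simp only [hb]; linarith
    have hab : a + b = 1 - ρ₁ := by
      have : t * (1 - ρ₂) + (1 - t) = 1 - t * ρ₂ := by ring
      rw [ha, hb, this, htρ]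
    set P₂' : X → ℝ := fun x => (a * P₂ x + b * P x) / (1 - ρ₁) with hP₂'
    have hP₂'pmf : IsPMF P₂' := by
      constructor
      · intro x
        have := hP₂.1 x
        have := (hPpos x).le
        positivity
      · rw [hP₂']
        simp only
        rw [← Finset.sum_div]
        have : ∑ x, (a * P₂ x + b * P x) = a * (∑ x, P₂ x) + b * (∑ x, P x) := by
          rw [Finset.sum_add_distrib, Finset.mul_sum, Finset.mul_sum]
        rw [this, hP₂.2, hP.2, mul_one, mul_one, hab, div_self hr1'.ne']
    have hmix' : ∀ x, ρ₁ * P₁ x + (1 - ρ₁) * P₂' x = P x := by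
      intro x
      have hm := hmix x
      have : (1 - ρ₁) * P₂' x = a * P₂ x + b * P x := by
        rw [hP₂']
        field_simp
      rw [this]
      have haP : a * P₂ x = t * ((1 - ρ₂) * P₂ x) := by rw [ha]; ring
      have h2 : (1 - ρ₂) * P₂ x = P x - ρ₂ * P₁ x := by linarith
      rw [haP, h2]
      have : ρ₁ * P₁ x + (t * (P x - ρ₂ * P₁ x) + b * P x)
          = (ρ₁ - t * ρ₂) * P₁ x + (t + b) * P x := by ring
      rw [this, htρ]
      rw [hb]; ring
    have hval : ρ₁ * KLdiv P₁ Q + (1 - ρ₁) * KLdiv P₂' P ≤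
        t * (ρ₂ * KLdiv P₁ Q + (1 - ρ₂) * KLdiv P₂ P) := by
      have hKL : (1 - ρ₁) * KLdiv P₂' P ≤ a * KLdiv P₂ P := by
        unfold KLdiv
        rw [Finset.mul_sum, Finset.mul_sum]
        apply Finset.sum_le_sum
        intro x _
        have e1 : (1 - ρ₁) * (P₂' x * Real.log (P₂' x / P x))
            = (a * P₂ x + b * P x) * Real.log ((a * P₂ x + b * P x) / ((a + b) * P x)) := by
          have hP₂'x : P₂' x = (a * P₂ x + b * P x) / (1 - ρ₁) := rfl
          have habne : a + b ≠ 0 := by rw [hab]; exact hr1'.ne'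
          rw [hP₂'x, div_div, ← hab, ← mul_assoc]
          congr 2
          rw [mul_comm]
          exact div_mul_cancel₀ _ habne
        rw [e1]
        exact key_logsum ha0 hb0 (hP₂.1 x) (hPpos x)
      have e2 : t * (ρ₂ * KLdiv P₁ Q + (1 - ρ₂) * KLdiv P₂ P)
          = ρ₁ * KLdiv P₁ Q + a * KLdiv P₂ P := by
        rw [ha, ← htρ]; ring
      rw [e2]
      linarith
    have hmem : ρ₁ * KLdiv P₁ Q + (1 - ρ₁) * KLdiv P₂' P ∈ pdSet ρ₁ P Q :=
      ⟨P₁, P₂', hP₁, hP₂'pmf, hmix', rfl⟩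
    exact le_trans
      (csInf_le (pdSet_bddBelow h0 (by linarith) hP hPpos hQ hQpos) hmem) hval
  have h5 : partialDiv ρ₁ P Q / t ≤ partialDiv ρ₂ P Q := by
    rw [partialDiv_eq]
    apply le_csInf (pdSet_nonempty ρ₂ hP)
    intro v hv
    rw [div_le_iff₀ ht0, mul_comm]
    exact claim v hv
  have h6 : 0 ≤ partialDiv ρ₂ P Q :=
    partialDiv_nonneg (by linarith) h1 hP hPpos hQ hQpos
  have h7 : partialDiv ρ₁ P Q ≤ t * partialDiv ρ₂ P Q := by
    rw [div_le_iff₀ ht0, mul_comm] at h5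
    exact h5
  nlinarith

end PD

/-! ### Binary entropy facts -/

lemma binEnt_le_cross {p q : ℝ} (hp0 : 0 ≤ p) (hp1 : p ≤ 1) (hq0 : 0 < q) (hq1 : q < 1) :
    binEnt p ≤ -(p * Real.log q) - (1 - p) * Real.log (1 - q) := by
  have h1 := mul_log_le_sub hp0 hq0
  have h2 := mul_log_le_sub (by linarith : (0:ℝ) ≤ 1 - p) (by linarith : (0:ℝ) < 1 - q)
  unfold binEnt
  nlinarith

lemma one_sub_inv {α : ℝ} (hα : 1 < α) : (1:ℝ) - 1/α = (α - 1)/α := by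
  have : (0:ℝ) < α := by linarith
  field_simp

lemma log_stuff {α : ℝ} (hα : 1 < α) :
    Real.log (1/α) = -Real.log α ∧ Real.log ((α-1)/α) = Real.log (α-1) - Real.log α := by
  have h0 : (0:ℝ) < α := by linarith
  have h1 : (0:ℝ) < α - 1 := by linarith
  constructor
  · rw [one_div, Real.log_inv]
  · rw [Real.log_div h1.ne' h0.ne']

lemma binEnt_le_a {p α : ℝ} (hα : 1 < α) (hp0 : 0 ≤ p) (hp1 : p ≤ 1) :
    binEnt p ≤ p * Real.log α + (1 - p) * (Real.log α - Real.log (α - 1)) := by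
  have h0 : (0:ℝ) < α := by linarith
  have hq0 : (0:ℝ) < 1/α := by positivity
  have hq1 : (1:ℝ)/α < 1 := by rw [div_lt_one h0]; linarith
  have h := binEnt_le_cross hp0 hp1 hq0 hq1
  rw [one_sub_inv hα, (log_stuff hα).1, (log_stuff hα).2] at h
  linarith [h]

lemma binEnt_le_b {p α : ℝ} (hα : 1 < α) (hp0 : 0 ≤ p) (hp1 : p ≤ 1) :
    binEnt p ≤ p * (Real.log α - Real.log (α - 1)) + (1 - p) * Real.log α := by
  have h0 : (0:ℝ) < α := by linarith
  have h1 : (0:ℝ) < α - 1 := by linarith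
  have hq0 : (0:ℝ) < (α-1)/α := by positivity
  have hq1 : (α-1)/α < 1 := by rw [div_lt_one h0]; linarith
  have h := binEnt_le_cross hp0 hp1 hq0 hq1
  have e : (1:ℝ) - (α-1)/α = 1/α := by field_simp; ring
  rw [e, (log_stuff hα).1, (log_stuff hα).2] at h
  linarith [h]

lemma Epart_le {α β : ℝ} (hα : 1 < α) (hβ0 : 0 ≤ β) (hβ1 : β ≤ 1) (hγ : (α-1)*β ≤ 1) :
    (α-1) * binEnt β + binEnt ((α-1)*β)
      ≤ Real.log α + (α-1) * (Real.log α - Real.log (α-1)) := by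
  have h1 : (0:ℝ) ≤ α - 1 := by linarith
  have hA := mul_le_mul_of_nonneg_left (binEnt_le_a hα hβ0 hβ1) h1
  have hB := binEnt_le_b hα (mul_nonneg h1 hβ0) hγ
  nlinarith [hA, hB]

lemma binEnt_at_inv {α : ℝ} (hα : 1 < α) :
    binEnt (1/α) = (1/α) * Real.log α + ((α-1)/α) * (Real.log α - Real.log (α-1)) := by
  unfold binEnt
  rw [one_sub_inv hα, (log_stuff hα).1, (log_stuff hα).2]
  ring

lemma binEnt_at_inv2 {α : ℝ} (hα : 1 < α) :
    binEnt ((α-1)*(1/α)) = ((α-1)/α) * (Real.log α - Real.log (α-1)) + (1/α) * Real.log α := by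
  have h0 : (0:ℝ) < α := by linarith
  have e : (α-1)*(1/α) = (α-1)/α := by field_simp
  have e2 : (1:ℝ) - (α-1)/α = 1/α := by field_simp; ring
  unfold binEnt
  rw [e, e2, (log_stuff hα).1, (log_stuff hα).2]
  ring

lemma Epart_at_inv {α : ℝ} (hα : 1 < α) :
    (α-1) * binEnt (1/α) + binEnt ((α-1)*(1/α))
      = Real.log α + (α-1) * (Real.log α - Real.log (α-1)) := by
  have h0 : (0:ℝ) < α := by linarith
  rw [binEnt_at_inv hα, binEnt_at_inv2 hα]
  field_simp
  ring

/-! ### Main theorem -/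

/-- The objective function of the supremum defining `overhead`. -/
noncomputable def gfun {Y : Type*} [Fintype Y] (A B : Y → ℝ) (α β : ℝ) : ℝ :=
  (α - 1) * binEnt β + binEnt ((α - 1) * β)
    - partialDiv ((α - 1) * β) A B - (α - 1) * partialDiv β B A

/-- The supremum defining the overhead cost `f(A,B,α)` is attained on `[0, 1/α]`:
`f(A,B,α)` equals the supremum of the same expression restricted to `β ∈ [0, 1/α]`. -/
theorem overhead_sup_on_small_interval {Y : Type*} [Fintype Y] (A B : Y → ℝ)
    (hA : IsPMF A) (hB : IsPMF B)
    (hApos : ∀ y, 0 < A y) (hBpos : ∀ y, 0 < B y)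
    (α : ℝ) (hα : 1 ≤ α) :
    overhead A B α =
      sSup { v : ℝ | ∃ β : ℝ, β ∈ Set.Icc (0 : ℝ) (1 / α) ∧
        v = (α - 1) * binEnt β + binEnt ((α - 1) * β)
            - partialDiv ((α - 1) * β) A B - (α - 1) * partialDiv β B A } := by
  have hS : overhead A B α =
      sSup { v : ℝ | ∃ β : ℝ, β ∈ Set.Icc (0 : ℝ) 1 ∧ (α - 1) * β ≤ 1 ∧
        v = gfun A B α β } := rfl
  have hT : sSup { v : ℝ | ∃ β : ℝ, β ∈ Set.Icc (0 : ℝ) (1 / α) ∧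
        v = (α - 1) * binEnt β + binEnt ((α - 1) * β)
            - partialDiv ((α - 1) * β) A B - (α - 1) * partialDiv β B A }
      = sSup { v : ℝ | ∃ β : ℝ, β ∈ Set.Icc (0 : ℝ) (1 / α) ∧ v = gfun A B α β } := rfl
  rw [hS, hT]
  set S := { v : ℝ | ∃ β : ℝ, β ∈ Set.Icc (0 : ℝ) 1 ∧ (α - 1) * β ≤ 1 ∧
        v = gfun A B α β } with hSdef
  set T := { v : ℝ | ∃ β : ℝ, β ∈ Set.Icc (0 : ℝ) (1 / α) ∧ v = gfun A B α β } with hTdef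
  rcases eq_or_lt_of_le hα with rfl | hα1
  · -- α = 1 : the two sets coincide
    have : S = T := by
      ext v
      constructor
      · rintro ⟨β, hβ, _, rfl⟩
        exact ⟨β, by norm_num at hβ ⊢; exact hβ, rfl⟩
      · rintro ⟨β, hβ, rfl⟩
        exact ⟨β, by norm_num at hβ ⊢; exact hβ, by norm_num, rfl⟩
    rw [this]
  · -- α > 1
    have h0 : (0:ℝ) < α := by linarith
    have ha1 : (0:ℝ) ≤ α - 1 := by linarith
    have hinv0 : (0:ℝ) ≤ 1/α := by positivity
    have hinv1 : 1/α ≤ 1 := by rw [div_le_one h0]; linarith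
    have hinvγ : (α - 1) * (1/α) ≤ 1 := by
      rw [mul_one_div, div_le_one h0]; linarith
    have hinvγ0 : (0:ℝ) ≤ (α - 1) * (1/α) := mul_nonneg ha1 hinv0
    -- upper bound for g
    have hbound : ∀ β : ℝ, 0 ≤ β → β ≤ 1 → (α - 1) * β ≤ 1 →
        gfun A B α β ≤ Real.log α + (α-1) * (Real.log α - Real.log (α-1)) := by
      intro β hb0 hb1 hc
      have hd1 : 0 ≤ partialDiv ((α - 1) * β) A B :=
        partialDiv_nonneg (mul_nonneg ha1 hb0) hc hA hApos hB hBpos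
      have hd2 : 0 ≤ partialDiv β B A :=
        partialDiv_nonneg hb0 hb1 hB hBpos hA hApos
      have hd2' : 0 ≤ (α - 1) * partialDiv β B A := mul_nonneg ha1 hd2
      have hE := Epart_le hα1 hb0 hb1 hc
      unfold gfun
      linarith
    -- T ⊆ S
    have hsub : T ⊆ S := by
      rintro v ⟨β, ⟨hb0, hb1⟩, rfl⟩
      refine ⟨β, ⟨hb0, le_trans hb1 hinv1⟩, ?_, rfl⟩
      calc (α - 1) * β ≤ (α - 1) * (1/α) := mul_le_mul_of_nonneg_left hb1 ha1
        _ ≤ 1 := hinvγ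
    have hTne : T.Nonempty := ⟨gfun A B α 0, 0, ⟨le_rfl, hinv0⟩, rfl⟩
    have hSne : S.Nonempty := hTne.mono hsub
    have hSbdd : BddAbove S := by
      refine ⟨Real.log α + (α-1) * (Real.log α - Real.log (α-1)), ?_⟩
      rintro v ⟨β, ⟨hb0, hb1⟩, hc, rfl⟩
      exact hbound β hb0 hb1 hc
    have hTbdd : BddAbove T := hSbdd.mono hsub
    -- key comparison : for β ≥ 1/α the value is dominated by g(1/α)
    have hkey : ∀ β : ℝ, 1/α ≤ β → β ≤ 1 → (α - 1) * β ≤ 1 →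
        gfun A B α β ≤ gfun A B α (1/α) := by
      intro β hb0 hb1 hc
      have hβ0 : (0:ℝ) ≤ β := le_trans hinv0 hb0
      have m1 : partialDiv ((α - 1) * (1/α)) A B ≤ partialDiv ((α - 1) * β) A B :=
        partialDiv_mono hinvγ0 (mul_le_mul_of_nonneg_left hb0 ha1) hc hA hApos hB hBpos
      have m2 : partialDiv (1/α) B A ≤ partialDiv β B A :=
        partialDiv_mono hinv0 hb0 hb1 hB hBpos hA hApos
      have m2' : (α - 1) * partialDiv (1/α) B A ≤ (α - 1) * partialDiv β B A :=
        mul_le_mul_of_nonneg_left m2 ha1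
      have hE := Epart_le hα1 hβ0 hb1 hc
      have hEeq := Epart_at_inv hα1
      unfold gfun
      have e1 : (α - 1) * binEnt (1/α) + binEnt ((α - 1) * (1/α))
          = Real.log α + (α-1) * (Real.log α - Real.log (α-1)) := hEeq
      linarith
    apply le_antisymm
    · apply csSup_le hSne
      rintro v ⟨β, ⟨hb0, hb1⟩, hc, rfl⟩
      by_cases hcase : β ≤ 1/α
      · exact le_csSup hTbdd ⟨β, ⟨hb0, hcase⟩, rfl⟩
      · push_neg at hcase
        exact le_trans (hkey β hcase.le hb1 hc)
          (le_csSup hTbdd ⟨1/α, ⟨hinv0, le_rfl⟩, rfl⟩)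
    · exact csSup_le_csSup hSbdd hTne hsub
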